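/- arXiv:2502.06523 — 4 statements merged into one kernel-verified Lean document; each statement's English description precedes it below -/
import Mathlib

section
/- For every function Q : Δ(S) × A → ℝ and every a ∈ A, the map b ↦ H_FIB Q(b,a) is convex on Δ(S): for all beliefs b₁, b₂ and λ ∈ [0,1], H_FIB Q(λb₁+(1−λ)b₂, a) ≤ λ·H_FIB Q(b₁,a) + (1−λ)·H_FIB Q(b₂,a). Consequently, any fixed point Q of H_FIB (Q = H_FIB Q) is convex in the belief. -/
open Finset
open scoped Classical

set_option linter.unusedSectionVars false

/-- A belief (probability distribution) over a finite state space `S`. -/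
structure Belief (S : Type*) [Fintype S] where
  val : S → ℝ
  nonneg : ∀ s, 0 ≤ val s
  sum_one : ∑ s, val s = 1

/-- The convex combination `l • b₁ + (1-l) • b₂` of two beliefs. -/
noncomputable def Belief.mix {S : Type*} [Fintype S] (b₁ b₂ : Belief S) (l : ℝ)
    (h0 : 0 ≤ l) (h1 : l ≤ 1) : Belief S where
  val s := l * b₁.val s + (1 - l) * b₂.val s
  nonneg s := add_nonneg (mul_nonneg h0 (b₁.nonneg s))
    (mul_nonneg (by linarith) (b₂.nonneg s))
  sum_one := by
    rw [Finset.sum_add_distrib, ← Finset.mul_sum, ← Finset.mul_sum, b₁.sum_one, b₂.sum_one]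
    ring

/-- `Q : Δ(S) × A → ℝ` is convex in the belief. -/
def ConvexInBelief {S A : Type*} [Fintype S] (Q : Belief S → A → ℝ) : Prop :=
  ∀ (a : A) (b₁ b₂ : Belief S) (l : ℝ) (h0 : 0 ≤ l) (h1 : l ≤ 1),
    Q (Belief.mix b₁ b₂ l h0 h1) a ≤ l * Q b₁ a + (1 - l) * Q b₂ a

/-- A finite POMDP: transition function `T s a s' = T(s'|s,a)`, observation function
`Z a s' o = Ω(o|a,s')`, rewards `R`, discount `γ ∈ (0,1)`. -/
structure POMDP (S A O : Type*) [Fintype S] [Fintype A] [Fintype O] where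
  T : S → A → S → ℝ
  T_nonneg : ∀ s a s', 0 ≤ T s a s'
  T_sum_one : ∀ s a, ∑ s', T s a s' = 1
  Z : A → S → O → ℝ
  Z_nonneg : ∀ a s' o, 0 ≤ Z a s' o
  Z_sum_one : ∀ a s', ∑ o, Z a s' o = 1
  R : S → A → ℝ
  γ : ℝ
  γ_pos : 0 < γ
  γ_lt_one : γ < 1

namespace POMDP

variable {S A O : Type*} [Fintype S] [Fintype A] [Fintype O] [Nonempty S] [Nonempty A]
  [Nonempty O]
variable (M : POMDP S A O)

/-- `Pr(s',o|s,a)` -/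
def prSO (s : S) (a : A) (s' : S) (o : O) : ℝ := M.Z a s' o * M.T s a s'

lemma prSO_nonneg (s : S) (a : A) (s' : S) (o : O) : 0 ≤ M.prSO s a s' o :=
  mul_nonneg (M.Z_nonneg a s' o) (M.T_nonneg s a s')

/-- `Pr(o|s,a)` -/
def prO (s : S) (a : A) (o : O) : ℝ := ∑ s', M.prSO s a s' o

/-- `Pr(s',o|b,a)` -/
def bprSO (b : Belief S) (a : A) (s' : S) (o : O) : ℝ := ∑ s, b.val s * M.prSO s a s' o

lemma bprSO_nonneg (b : Belief S) (a : A) (s' : S) (o : O) : 0 ≤ M.bprSO b a s' o :=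
  Finset.sum_nonneg fun s _ => mul_nonneg (b.nonneg s) (M.prSO_nonneg s a s' o)

/-- `Pr(o|b,a)` -/
def bprO (b : Belief S) (a : A) (o : O) : ℝ := ∑ s', M.bprSO b a s' o

/-- The unit belief `δ_s`. -/
noncomputable def unit (s : S) : Belief S where
  val s' := if s' = s then 1 else 0
  nonneg s' := by by_cases h : s' = s <;> simp [h]
  sum_one := by simp

/-- The posterior belief `b_{b,a,o}`, defined when `Pr(o|b,a) > 0`. -/
noncomputable def post (b : Belief S) (a : A) (o : O) (h : 0 < M.bprO b a o) : Belief S where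
  val s' := M.bprSO b a s' o / M.bprO b a o
  nonneg s' := div_nonneg (M.bprSO_nonneg b a s' o) h.le
  sum_one := by
    rw [← Finset.sum_div]
    exact div_self (ne_of_gt h)

/-- The one-step belief `b_{s,a,o} = b_{δ_s,a,o}`, defined when `Pr(o|s,a) > 0`. -/
noncomputable def osb (s : S) (a : A) (o : O) (h : 0 < M.prO s a o) : Belief S where
  val s' := M.prSO s a s' o / M.prO s a o
  nonneg s' := div_nonneg (M.prSO_nonneg s a s' o) h.le
  sum_one := by
    unfold prO
    rw [← Finset.sum_div]
    exact div_self (ne_of_gt h)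

/-- Expected reward `R(b,a)`. -/
noncomputable def expR (b : Belief S) (a : A) : ℝ := ∑ s, b.val s * M.R s a

/-- The fast informed bound operator `H_FIB`. -/
noncomputable def HFIB (Q : Belief S → A → ℝ) (b : Belief S) (a : A) : ℝ :=
  M.expR b a + M.γ * ∑ o, Finset.univ.sup' Finset.univ_nonempty
    (fun a' => ∑ s', M.bprSO b a s' o * Q (unit s') a')

/-- The tighter informed bound operator `H_TIB`. -/
noncomputable def HTIB (Q : Belief S → A → ℝ) (b : Belief S) (a : A) : ℝ :=
  M.expR b a + M.γ * ∑ o, Finset.univ.sup' Finset.univ_nonempty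
    (fun a' => ∑ s, if h : 0 < M.prO s a o then
      b.val s * M.prO s a o * Q (M.osb s a o h) a' else 0)

/-- The optimal Bellman operator `H_POMDP`. -/
noncomputable def HPOMDP (Q : Belief S → A → ℝ) (b : Belief S) (a : A) : ℝ :=
  M.expR b a + M.γ * ∑ o, if h : 0 < M.bprO b a o then
    M.bprO b a o * Finset.univ.sup' Finset.univ_nonempty (fun a' => Q (M.post b a o h) a')
  else 0

/-- Index type for the family `B_SAO`: `none` indexes the initial belief `b₀`,
`some (s,a,o)` (with `Pr(o|s,a) > 0`) indexes the one-step belief `b_{s,a,o}`. -/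
abbrev OSIdx : Type _ := Option {x : S × A × O // 0 < M.prO x.1 x.2.1 x.2.2}

/-- The member of the family `B_SAO` (with initial belief `b₀`) at a given index. -/
noncomputable def member (b₀ : Belief S) : M.OSIdx → Belief S
  | none => b₀
  | some x => M.osb x.1.1 x.1.2.1 x.1.2.2 x.2

/-- `w` is a weight function for the belief `tgt` over the family `B_SAO`. -/
def IsWeight (b₀ : Belief S) (tgt : Belief S) (w : M.OSIdx → ℝ) : Prop :=
  (∀ i, 0 ≤ w i) ∧ ∀ s, ∑ i, w i * (M.member b₀ i).val s = tgt.val s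

/-- The optimized tighter informed bound operator `H_OTIB`. -/
noncomputable def HOTIB (b₀ : Belief S) (Q : Belief S → A → ℝ) (b : Belief S) (a : A) : ℝ :=
  M.expR b a + M.γ * ∑ o, if h : 0 < M.bprO b a o then
    Finset.univ.sup' Finset.univ_nonempty (fun a' =>
      M.bprO b a o * ⨅ w : {w : M.OSIdx → ℝ // M.IsWeight b₀ (M.post b a o h) w},
        ∑ i, (w : M.OSIdx → ℝ) i * Q (M.member b₀ i) a')
  else 0

/-- The operator `H_ŵ` induced by a weight selection `W`. -/
noncomputable def Hsel (b₀ : Belief S)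
    (W : ∀ (b : Belief S) (a : A) (o : O), 0 < M.bprO b a o → (M.OSIdx → ℝ))
    (Q : Belief S → A → ℝ) (b : Belief S) (a : A) : ℝ :=
  M.expR b a + M.γ * ∑ o, if h : 0 < M.bprO b a o then
    Finset.univ.sup' Finset.univ_nonempty (fun a' =>
      M.bprO b a o * ∑ i, W b a o h i * Q (M.member b₀ i) a')
  else 0

end POMDP

/-! `Q` enters `H_FIB Q (b, a)` only through its values at unit beliefs, which do not depend on
`b`, so every inner sum `∑ s', Pr(s',o|b,a) · Q(δ_{s'}, a')` is affine in `b`. A maximum of affine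
functions is convex, and `R(b,a) + γ · ∑ₒ (convex)` is again convex. A fixed point of `H_FIB` is
of the form `H_FIB Q`, hence convex. -/

theorem Finset.sup'_mul_add_mul_le {ι : Type*} {s : Finset ι} (H : s.Nonempty) (f g : ι → ℝ)
    {x y : ℝ} (hx : 0 ≤ x) (hy : 0 ≤ y) :
    s.sup' H (fun i => x * f i + y * g i) ≤ x * s.sup' H f + y * s.sup' H g :=
  Finset.sup'_le H _ fun _ hi =>
    add_le_add (mul_le_mul_of_nonneg_left (Finset.le_sup' f hi) hx)
      (mul_le_mul_of_nonneg_left (Finset.le_sup' g hi) hy)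

namespace POMDP

variable {S A O : Type*} [Fintype S] [Fintype A] [Fintype O] (M : POMDP S A O)

lemma expR_mix (b₁ b₂ : Belief S) {l : ℝ} (h0 : 0 ≤ l) (h1 : l ≤ 1) (a : A) :
    M.expR (b₁.mix b₂ l h0 h1) a = l * M.expR b₁ a + (1 - l) * M.expR b₂ a := by
  simp only [expR, Belief.mix, add_mul, mul_assoc, Finset.sum_add_distrib, Finset.mul_sum]

lemma bprSO_mix (b₁ b₂ : Belief S) {l : ℝ} (h0 : 0 ≤ l) (h1 : l ≤ 1) (a : A) (s' : S) (o : O) :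
    M.bprSO (b₁.mix b₂ l h0 h1) a s' o = l * M.bprSO b₁ a s' o + (1 - l) * M.bprSO b₂ a s' o := by
  simp only [bprSO, Belief.mix, add_mul, mul_assoc, Finset.sum_add_distrib, Finset.mul_sum]

lemma sum_bprSO_mix_mul (b₁ b₂ : Belief S) {l : ℝ} (h0 : 0 ≤ l) (h1 : l ≤ 1) (a : A) (o : O)
    (V : S → ℝ) :
    ∑ s', M.bprSO (b₁.mix b₂ l h0 h1) a s' o * V s' =
      l * ∑ s', M.bprSO b₁ a s' o * V s' + (1 - l) * ∑ s', M.bprSO b₂ a s' o * V s' := by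
  simp only [bprSO_mix, add_mul, mul_assoc, Finset.sum_add_distrib, Finset.mul_sum]

theorem HFIB_mix_le [Nonempty A] (Q : Belief S → A → ℝ) (b₁ b₂ : Belief S) {l : ℝ}
    (h0 : 0 ≤ l) (h1 : l ≤ 1) (a : A) :
    M.HFIB Q (b₁.mix b₂ l h0 h1) a ≤ l * M.HFIB Q b₁ a + (1 - l) * M.HFIB Q b₂ a := by
  have hobs : ∑ o, Finset.univ.sup' Finset.univ_nonempty
        (fun a' => ∑ s', M.bprSO (b₁.mix b₂ l h0 h1) a s' o * Q (unit s') a') ≤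
      l * ∑ o, Finset.univ.sup' Finset.univ_nonempty
        (fun a' => ∑ s', M.bprSO b₁ a s' o * Q (unit s') a') +
      (1 - l) * ∑ o, Finset.univ.sup' Finset.univ_nonempty
        (fun a' => ∑ s', M.bprSO b₂ a s' o * Q (unit s') a') := by
    rw [Finset.mul_sum, Finset.mul_sum, ← Finset.sum_add_distrib]
    refine Finset.sum_le_sum fun o _ => ?_
    simp only [sum_bprSO_mix_mul]
    exact Finset.sup'_mul_add_mul_le _ _ _ h0 (sub_nonneg.2 h1)
  have hγ := mul_le_mul_of_nonneg_left hobs M.γ_pos.le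
  simp only [HFIB, expR_mix]
  linarith

end POMDP

theorem HFIB_convex_general {S A O : Type*} [Fintype S] [Fintype A] [Fintype O]
    [Nonempty A] (M : POMDP S A O) :
    (∀ Q : Belief S → A → ℝ, ConvexInBelief (fun b a => M.HFIB Q b a)) ∧
    (∀ Q : Belief S → A → ℝ, (∀ b a, Q b a = M.HFIB Q b a) → ConvexInBelief Q) := by
  refine ⟨fun Q a b₁ b₂ l h0 h1 => M.HFIB_mix_le Q b₁ b₂ h0 h1 a, fun Q hfix a b₁ b₂ l h0 h1 => ?_⟩
  rw [hfix (b₁.mix b₂ l h0 h1) a, hfix b₁ a, hfix b₂ a]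
  exact M.HFIB_mix_le Q b₁ b₂ h0 h1 a

/-- For any `Q`, `H_FIB Q` is convex in the belief; consequently any fixed point of `H_FIB`
is convex in the belief. -/
theorem HFIB_convex {S A O : Type*} [Fintype S] [Fintype A] [Fintype O]
    [Nonempty S] [Nonempty A] [Nonempty O] (M : POMDP S A O) :
    (∀ Q : Belief S → A → ℝ, ConvexInBelief (fun b a => M.HFIB Q b a)) ∧
    (∀ Q : Belief S → A → ℝ, (∀ b a, Q b a = M.HFIB Q b a) → ConvexInBelief Q) :=
  HFIB_convex_general M
end

section
/- Let b be a belief, a ∈ A and o ∈ O with Pr(o|b,a) > 0. Then for every s' ∈ S: ∑_{s∈S with Pr(o|s,a)>0} b(s)·Pr(o|s,a)·b_{s,a,o}(s') = Pr(o|b,a)·b_{b,a,o}(s'). Equivalently, the canonical weights given by w_{b,a,o}(b_{s,a,o}) = b(s)·Pr(o|s,a)/Pr(o|b,a) for each one-step belief b_{s,a,o} (and weight 0 on b₀) form a weight function for b_{b,a,o} over B_SAO. -/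
/-!
Summand by summand, `b(s)·Pr(o|s,a)·b_{s,a,o}(s')` equals `b(s)·Pr(s',o|s,a)`: when
`Pr(o|s,a) > 0` the normalisation cancels, and otherwise `Pr(s',o|s,a) = 0`, being a
nonnegative summand of `Pr(o|s,a) = 0`. Summing over `s` gives `Pr(s',o|b,a)`, which is
`Pr(o|b,a)·b_{b,a,o}(s')` by the same cancellation.
-/

open Finset
open scoped Classical

set_option linter.unusedSectionVars false

namespace POMDP

variable {S A O : Type*} [Fintype S] [Fintype A] [Fintype O] [Nonempty S] [Nonempty A]
  [Nonempty O] (M : POMDP S A O)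

lemma prSO_eq_zero_of_not_prO_pos {s : S} {a : A} {o : O} (hs : ¬0 < M.prO s a o) (s' : S) :
    M.prSO s a s' o = 0 := by
  have hzero : M.prO s a o = 0 :=
    le_antisymm (not_lt.mp hs) (sum_nonneg fun x _ => M.prSO_nonneg s a x o)
  exact (sum_eq_zero_iff_of_nonneg fun x _ => M.prSO_nonneg s a x o).mp hzero s' (mem_univ s')

lemma prO_mul_osb_val {s : S} {a : A} {o : O} (hs : 0 < M.prO s a o) (s' : S) :
    M.prO s a o * (M.osb s a o hs).val s' = M.prSO s a s' o :=
  mul_div_cancel₀ _ hs.ne'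

lemma bprO_mul_post_val {b : Belief S} {a : A} {o : O} (h : 0 < M.bprO b a o) (s' : S) :
    M.bprO b a o * (M.post b a o h).val s' = M.bprSO b a s' o :=
  mul_div_cancel₀ _ h.ne'

lemma dite_mul_osb_val_eq (b : Belief S) (a : A) (o : O) (s s' : S) :
    (if hs : 0 < M.prO s a o then b.val s * M.prO s a o * (M.osb s a o hs).val s' else 0)
      = b.val s * M.prSO s a s' o := by
  split_ifs with hs
  · rw [mul_assoc, M.prO_mul_osb_val hs]
  · rw [M.prSO_eq_zero_of_not_prO_pos hs, mul_zero]

end POMDP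

/-- The canonical weights `b(s)·Pr(o|s,a)/Pr(o|b,a)` on the one-step beliefs represent the
posterior belief `b_{b,a,o}`: for every `s'`,
`∑_{s : Pr(o|s,a)>0} b(s)·Pr(o|s,a)·b_{s,a,o}(s') = Pr(o|b,a)·b_{b,a,o}(s')`. -/
theorem canonical_weights {S A O : Type*} [Fintype S] [Fintype A] [Fintype O]
    [Nonempty S] [Nonempty A] [Nonempty O] (M : POMDP S A O)
    (b : Belief S) (a : A) (o : O) (h : 0 < M.bprO b a o) (s' : S) :
    (∑ s, if hs : 0 < M.prO s a o then
        b.val s * M.prO s a o * (M.osb s a o hs).val s' else 0)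
      = M.bprO b a o * (M.post b a o h).val s' := by
  rw [M.bprO_mul_post_val h]
  exact sum_congr rfl fun s _ => M.dite_mul_osb_val_eq b a o s s'
end

section
/- For all functions Q, Q' : Δ(S) × A → ℝ, every constant C ≥ 0 such that |Q(b',a') − Q'(b',a')| ≤ C for every belief b' ∈ Δ(S) and every a' ∈ A, every belief b ∈ Δ(S) and every a ∈ A: |H_TIB Q(b,a) − H_TIB Q'(b,a)| ≤ γ·C. In particular H_TIB is a contraction with Lipschitz constant γ with respect to the supremum norm on bounded functions Δ(S) × A → ℝ. -/
/-! For each observation `o`, the `a'`-maximised terms of `H_TIB Q` and `H_TIB Q'` differ by at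
most `Pr(o|b,a)·C`, since a maximum is 1-Lipschitz in the sup norm and each one-step belief
`b_{s,a,o}` enters with weight `b(s)·Pr(o|s,a)`, whose sum over `s` is `Pr(o|b,a)`. Summing over
`o` uses `∑_o Pr(o|b,a) = 1`. -/

open Finset
open scoped Classical

set_option linter.unusedSectionVars false

namespace Finset

variable {ι α : Type*} [AddCommGroup α] [LinearOrder α] [IsOrderedAddMonoid α]
  {s : Finset ι} {f g : ι → α} {c : α}

lemma sup'_sub_sup'_le (hs : s.Nonempty) (h : ∀ i ∈ s, f i - g i ≤ c) :
    s.sup' hs f - s.sup' hs g ≤ c :=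
  sub_le_iff_le_add'.2 <| sup'_le _ _ fun i hi =>
    (sub_le_iff_le_add'.1 (h i hi)).trans (add_le_add_left (le_sup' g hi) c)

lemma abs_sup'_sub_sup'_le (hs : s.Nonempty) (h : ∀ i ∈ s, |f i - g i| ≤ c) :
    |s.sup' hs f - s.sup' hs g| ≤ c :=
  abs_sub_le_iff.2 ⟨sup'_sub_sup'_le hs fun i hi => (abs_sub_le_iff.1 (h i hi)).1,
    sup'_sub_sup'_le hs fun i hi => (abs_sub_le_iff.1 (h i hi)).2⟩

end Finset

namespace POMDP

variable {S A O : Type*} [Fintype S] [Fintype A] [Fintype O] [Nonempty S] [Nonempty A]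
  [Nonempty O]
variable (M : POMDP S A O)

lemma prO_nonneg (s : S) (a : A) (o : O) : 0 ≤ M.prO s a o :=
  sum_nonneg fun s' _ => M.prSO_nonneg s a s' o

lemma sum_prO_eq_one (s : S) (a : A) : ∑ o, M.prO s a o = 1 := by
  simp only [prO, prSO]
  rw [sum_comm]
  simp only [← sum_mul, M.Z_sum_one, one_mul, M.T_sum_one]

lemma bprO_eq_sum (b : Belief S) (a : A) (o : O) :
    M.bprO b a o = ∑ s, b.val s * M.prO s a o := by
  simp only [bprO, bprSO, prO, mul_sum]
  exact sum_comm

lemma sum_bprO_eq_one (b : Belief S) (a : A) : ∑ o, M.bprO b a o = 1 := by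
  simp only [bprO_eq_sum, sum_comm (γ := O), ← mul_sum, sum_prO_eq_one, mul_one, b.sum_one]

noncomputable def tibBackup (Q : Belief S → A → ℝ) (b : Belief S) (a : A) (o : O) (a' : A) : ℝ :=
  ∑ s, if h : 0 < M.prO s a o then b.val s * M.prO s a o * Q (M.osb s a o h) a' else 0

lemma HTIB_eq (Q : Belief S → A → ℝ) (b : Belief S) (a : A) :
    M.HTIB Q b a = M.expR b a + M.γ * ∑ o, univ.sup' univ_nonempty (M.tibBackup Q b a o) :=
  rfl

lemma abs_tibBackup_sub_le {Q Q' : Belief S → A → ℝ} {C : ℝ}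
    (hQ : ∀ b' a', |Q b' a' - Q' b' a'| ≤ C) (b : Belief S) (a : A) (o : O) (a' : A) :
    |M.tibBackup Q b a o a' - M.tibBackup Q' b a o a'| ≤ M.bprO b a o * C := by
  rw [tibBackup, tibBackup, ← sum_sub_distrib, bprO_eq_sum, sum_mul]
  refine (abs_sum_le_sum_abs _ _).trans (sum_le_sum fun s _ => ?_)
  by_cases hpos : 0 < M.prO s a o
  · have hw : 0 ≤ b.val s * M.prO s a o := mul_nonneg (b.nonneg s) hpos.le
    rw [dif_pos hpos, dif_pos hpos, ← mul_sub, abs_mul, abs_of_nonneg hw]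
    exact mul_le_mul_of_nonneg_left (hQ _ a') hw
  · have hzero : M.prO s a o = 0 := le_antisymm (not_lt.1 hpos) (M.prO_nonneg s a o)
    simp [hzero]

end POMDP

theorem HTIB_contraction_general {S A O : Type*} [Fintype S] [Fintype A] [Fintype O]
    [Nonempty S] [Nonempty A] [Nonempty O] (M : POMDP S A O)
    (Q Q' : Belief S → A → ℝ) (C : ℝ)
    (h : ∀ (b' : Belief S) (a' : A), |Q b' a' - Q' b' a'| ≤ C)
    (b : Belief S) (a : A) :
    |M.HTIB Q b a - M.HTIB Q' b a| ≤ M.γ * C := by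
  calc |M.HTIB Q b a - M.HTIB Q' b a|
      = M.γ * |∑ o, (univ.sup' univ_nonempty (M.tibBackup Q b a o)
          - univ.sup' univ_nonempty (M.tibBackup Q' b a o))| := by
        rw [M.HTIB_eq, M.HTIB_eq, add_sub_add_left_eq_sub, ← mul_sub, abs_mul,
          abs_of_pos M.γ_pos, sum_sub_distrib]
    _ ≤ M.γ * ∑ o, M.bprO b a o * C := by
        refine mul_le_mul_of_nonneg_left ((abs_sum_le_sum_abs _ _).trans ?_) M.γ_pos.le
        exact sum_le_sum fun o _ =>
          abs_sup'_sub_sup'_le _ fun a' _ => M.abs_tibBackup_sub_le h b a o a'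
    _ = M.γ * C := by rw [← sum_mul, M.sum_bprO_eq_one, one_mul]

/-- `H_TIB` contracts sup-distance by a factor `γ`. -/
theorem HTIB_contraction {S A O : Type*} [Fintype S] [Fintype A] [Fintype O]
    [Nonempty S] [Nonempty A] [Nonempty O] (M : POMDP S A O)
    (Q Q' : Belief S → A → ℝ) (C : ℝ) (hC : 0 ≤ C)
    (h : ∀ (b' : Belief S) (a' : A), |Q b' a' - Q' b' a'| ≤ C)
    (b : Belief S) (a : A) :
    |M.HTIB Q b a - M.HTIB Q' b a| ≤ M.γ * C :=
  HTIB_contraction_general M Q Q' C h b a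
end

section
/- For all functions Q, Q' : Δ(S) × A → ℝ, every constant C ≥ 0 such that |Q(b',a') − Q'(b',a')| ≤ C for every belief b' ∈ Δ(S) and every a' ∈ A, every belief b ∈ Δ(S) and every a ∈ A: |H_OTIB Q(b,a) − H_OTIB Q'(b,a)| ≤ γ·C. In particular H_OTIB is a contraction with Lipschitz constant γ with respect to the supremum norm on bounded functions Δ(S) × A → ℝ. -/
open Finset
open scoped Classical

set_option linter.unusedSectionVars false

/-!
Maximizing over actions and taking an infimum over a family are both non-expansive for the sup
distance. A weight function for a belief sums to one, because the belief and the members of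
`B_SAO` are probability distributions; hence its weighted sums of `Q` and `Q'` differ by at most
`C`. The term of observation `o` is scaled by `Pr(o|b,a)`, and these sum to one over `o`.
-/

lemma bddBelow_range_of_abs_sub_le {ι : Sort*} {f g : ι → ℝ} {K : ℝ}
    (hf : BddBelow (Set.range f)) (h : ∀ i, |f i - g i| ≤ K) : BddBelow (Set.range g) := by
  obtain ⟨m, hm⟩ := hf
  refine ⟨m - K, Set.forall_mem_range.2 fun i => ?_⟩
  have hfi := hm (Set.mem_range_self i)
  have hfg := (abs_sub_le_iff.1 (h i)).1
  linarith

/-- The real `⨅` is `0` on empty families and on families unbounded below; `f` and `g` are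
bounded below together, so the bound survives these junk values as long as `0 ≤ K`. -/
theorem Real.abs_iInf_sub_iInf_le {ι : Sort*} {f g : ι → ℝ} {K : ℝ} (hK : 0 ≤ K)
    (h : ∀ i, |f i - g i| ≤ K) : |(⨅ i, f i) - ⨅ i, g i| ≤ K := by
  have h' : ∀ i, |g i - f i| ≤ K := fun i => abs_sub_comm (f i) (g i) ▸ h i
  rcases isEmpty_or_nonempty ι with hι | hι
  · simpa using hK
  by_cases hf : BddBelow (Set.range f)
  · have hg := bddBelow_range_of_abs_sub_le hf h
    refine abs_sub_le_iff.2 ⟨sub_le_iff_le_add'.2 ?_, sub_le_iff_le_add'.2 ?_⟩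
    exacts [le_ciInf_add fun i =>
        (ciInf_le hf i).trans (sub_le_iff_le_add'.1 (abs_sub_le_iff.1 (h i)).1),
      le_ciInf_add fun i =>
        (ciInf_le hg i).trans (sub_le_iff_le_add'.1 (abs_sub_le_iff.1 (h i)).2)]
  · have hg : ¬BddBelow (Set.range g) := fun hg => hf (bddBelow_range_of_abs_sub_le hg h')
    simpa [Real.iInf_of_not_bddBelow hf, Real.iInf_of_not_bddBelow hg] using hK

theorem Finset.abs_sup'_sub_sup'_le_s12 {ι G : Type*} [AddCommGroup G] [LinearOrder G]
    [IsOrderedAddMonoid G] {s : Finset ι} (hs : s.Nonempty) {f g : ι → G} {K : G}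
    (h : ∀ i ∈ s, |f i - g i| ≤ K) : |s.sup' hs f - s.sup' hs g| ≤ K := by
  have one_sided :
      ∀ {f g : ι → G}, (∀ i ∈ s, |f i - g i| ≤ K) → s.sup' hs f - s.sup' hs g ≤ K :=
    fun h => sub_le_iff_le_add'.2 <| sup'_le _ _ fun i hi =>
      (sub_le_iff_le_add'.1 (abs_sub_le_iff.1 (h i hi)).1).trans
        (add_le_add_left (le_sup' _ hi) K)
  exact abs_sub_le_iff.2
    ⟨one_sided h, one_sided fun i hi => abs_sub_comm (f i) (g i) ▸ h i hi⟩

theorem Finset.abs_sum_mul_sub_sum_mul_le {ι R : Type*} [CommRing R] [LinearOrder R]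
    [IsStrictOrderedRing R] {s : Finset ι} {w x y : ι → R} {K : R} (hw : ∀ i ∈ s, 0 ≤ w i)
    (hw₁ : ∑ i ∈ s, w i = 1) (h : ∀ i ∈ s, |x i - y i| ≤ K) :
    |∑ i ∈ s, w i * x i - ∑ i ∈ s, w i * y i| ≤ K :=
  calc |∑ i ∈ s, w i * x i - ∑ i ∈ s, w i * y i|
        = |∑ i ∈ s, w i * (x i - y i)| := by simp only [mul_sub, sum_sub_distrib]
    _ ≤ ∑ i ∈ s, w i * |x i - y i| := (abs_sum_le_sum_abs _ _).trans_eq <|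
        sum_congr rfl fun i hi => by rw [abs_mul, abs_of_nonneg (hw i hi)]
    _ ≤ ∑ i ∈ s, w i * K :=
        sum_le_sum fun i hi => mul_le_mul_of_nonneg_left (h i hi) (hw i hi)
    _ = K := by rw [← sum_mul, hw₁, one_mul]

namespace POMDP

variable {S A O : Type*} [Fintype S] [Fintype A] [Fintype O] [Nonempty S] [Nonempty A]
  [Nonempty O]
variable (M : POMDP S A O)

lemma bprO_nonneg (b : Belief S) (a : A) (o : O) : 0 ≤ M.bprO b a o :=
  sum_nonneg fun s' _ => M.bprSO_nonneg b a s' o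

lemma IsWeight.sum_eq_one {M : POMDP S A O} {b₀ tgt : Belief S} {w : M.OSIdx → ℝ}
    (hw : M.IsWeight b₀ tgt w) : ∑ i, w i = 1 :=
  calc ∑ i, w i = ∑ i, w i * ∑ s, (M.member b₀ i).val s := by
        simp only [Belief.sum_one, mul_one]
    _ = ∑ s, ∑ i, w i * (M.member b₀ i).val s := by simp only [mul_sum]; exact sum_comm
    _ = 1 := by simp only [hw.2, tgt.sum_one]

noncomputable def weightedInf (b₀ tgt : Belief S) (Q : Belief S → A → ℝ) (a' : A) : ℝ :=
  ⨅ w : {w : M.OSIdx → ℝ // M.IsWeight b₀ tgt w},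
    ∑ i, (w : M.OSIdx → ℝ) i * Q (M.member b₀ i) a'

lemma abs_weightedInf_sub_le (b₀ tgt : Belief S) {Q Q' : Belief S → A → ℝ} {C : ℝ}
    (hC : 0 ≤ C) (h : ∀ b' a', |Q b' a' - Q' b' a'| ≤ C) (a' : A) :
    |M.weightedInf b₀ tgt Q a' - M.weightedInf b₀ tgt Q' a'| ≤ C := by
  unfold weightedInf
  exact Real.abs_iInf_sub_iInf_le hC fun w =>
    abs_sum_mul_sub_sum_mul_le (fun i _ => w.2.1 i) w.2.sum_eq_one fun i _ => h _ _

noncomputable def otibTerm (b₀ : Belief S) (Q : Belief S → A → ℝ) (b : Belief S) (a : A)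
    (o : O) : ℝ :=
  if h : 0 < M.bprO b a o then
    univ.sup' univ_nonempty fun a' => M.bprO b a o * M.weightedInf b₀ (M.post b a o h) Q a'
  else 0

lemma HOTIB_eq (b₀ : Belief S) (Q : Belief S → A → ℝ) (b : Belief S) (a : A) :
    M.HOTIB b₀ Q b a = M.expR b a + M.γ * ∑ o, M.otibTerm b₀ Q b a o :=
  rfl

lemma abs_otibTerm_sub_le (b₀ : Belief S) {Q Q' : Belief S → A → ℝ} {C : ℝ} (hC : 0 ≤ C)
    (h : ∀ b' a', |Q b' a' - Q' b' a'| ≤ C) (b : Belief S) (a : A) (o : O) :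
    |M.otibTerm b₀ Q b a o - M.otibTerm b₀ Q' b a o| ≤ M.bprO b a o * C := by
  unfold otibTerm
  split_ifs with ho
  · refine abs_sup'_sub_sup'_le_s12 _ fun a' _ => ?_
    rw [← mul_sub, abs_mul, abs_of_pos ho]
    exact mul_le_mul_of_nonneg_left (M.abs_weightedInf_sub_le b₀ _ hC h a') ho.le
  · rw [sub_self, abs_zero]
    exact mul_nonneg (M.bprO_nonneg b a o) hC

end POMDP

/-- `H_OTIB` contracts sup-distance by a factor `γ`. -/
theorem HOTIB_contraction {S A O : Type*} [Fintype S] [Fintype A] [Fintype O]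
    [Nonempty S] [Nonempty A] [Nonempty O] (M : POMDP S A O) (b₀ : Belief S)
    (Q Q' : Belief S → A → ℝ) (C : ℝ) (hC : 0 ≤ C)
    (h : ∀ (b' : Belief S) (a' : A), |Q b' a' - Q' b' a'| ≤ C)
    (b : Belief S) (a : A) :
    |M.HOTIB b₀ Q b a - M.HOTIB b₀ Q' b a| ≤ M.γ * C :=
  calc |M.HOTIB b₀ Q b a - M.HOTIB b₀ Q' b a|
      = M.γ * |∑ o, (M.otibTerm b₀ Q b a o - M.otibTerm b₀ Q' b a o)| := by
        rw [M.HOTIB_eq, M.HOTIB_eq, add_sub_add_left_eq_sub, ← mul_sub, ← sum_sub_distrib,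
          abs_mul, abs_of_pos M.γ_pos]
    _ ≤ M.γ * ∑ o, M.bprO b a o * C := mul_le_mul_of_nonneg_left
        ((abs_sum_le_sum_abs _ _).trans <|
          sum_le_sum fun o _ => M.abs_otibTerm_sub_le b₀ hC h b a o)
        M.γ_pos.le
    _ = M.γ * C := by rw [← sum_mul, M.sum_bprO_eq_one, one_mul]
end
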